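/- arXiv:0901.1397 — 2 statements merged into one kernel-verified Lean document; each statement's English description precedes it below -/
import Mathlib

section
/- The morphism γ : ℕ* → ℕ* defined on letters by γ(i) = 0·(i+1) preserves irreducibility with respect to squares: for every finite word w over ℕ, if w is irreducible with respect to squares then γ(w) is irreducible with respect to squares. -/
/-- The morphism γ : ℕ* → ℕ* with γ(i) = 0·(i+1), applied letterwise to a word. -/
def gammaW (w : List ℕ) : List ℕ := (w.map fun i => [0, i + 1]).flatten

/-- A word `w` over ℕ is irreducible with respect to squares: at every position
(0-indexed `n`, corresponding to 1-indexed position `n+1`), replacing the letter there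
by any strictly smaller letter produces a word having a square factor ending at that
position (i.e. a suffix of the prefix of length `n+1` of the modified word is a square). -/
def SqIrreducible (w : List ℕ) : Prop :=
  ∀ (n : ℕ) (hn : n < w.length), ∀ c < w[n],
    ∃ x : List ℕ, x ≠ [] ∧ (x ++ x) <:+ ((w.set n c).take (n + 1))

lemma gammaW_cons (a : ℕ) (l : List ℕ) : gammaW (a :: l) = 0 :: (a + 1) :: gammaW l := by
  simp [gammaW]

lemma gammaW_append (a b : List ℕ) : gammaW (a ++ b) = gammaW a ++ gammaW b := by
  simp [gammaW]

lemma gammaW_length (w : List ℕ) : (gammaW w).length = 2 * w.length := by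
  induction w with
  | nil => rfl
  | cons a l ih => rw [gammaW_cons]; simp [ih]; ring

lemma gammaW_ne_nil {x : List ℕ} (hx : x ≠ []) : gammaW x ≠ [] := by
  cases x with
  | nil => exact absurd rfl hx
  | cons a l => rw [gammaW_cons]; simp

/-- The morphism γ(i) = 0·(i+1) preserves irreducibility with respect to squares. -/
theorem gamma_irreducible (w : List ℕ) (hw : SqIrreducible w) :
    SqIrreducible (gammaW w) := by
  intro n hn c hc
  rw [gammaW_length] at hn
  rcases Nat.even_or_odd n with ⟨k, hk⟩ | ⟨k, hk⟩
  · -- even position: letter is 0, contradiction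
    exfalso
    have hklt : k < w.length := by omega
    have hdec : gammaW w = gammaW (w.take k) ++ 0 :: (w[k] + 1) :: gammaW (w.drop (k + 1)) := by
      conv_lhs => rw [← List.take_append_drop k w, List.drop_eq_getElem_cons hklt]
      rw [gammaW_append, gammaW_cons]
    have hA : (gammaW (w.take k)).length = 2 * k := by
      rw [gammaW_length, List.length_take]; omega
    have : (gammaW w)[n] = 0 := by
      rw [List.getElem_of_eq hdec, List.getElem_append_right (by omega)]
      have h0 : n - (gammaW (w.take k)).length = 0 := by omega
      simp [h0]
    omega
  · -- odd position n = 2k+1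
    have hklt : k < w.length := by omega
    set A := gammaW (w.take k) with hAdef
    have hA : A.length = 2 * k := by
      rw [hAdef, gammaW_length, List.length_take]; omega
    have hdec : gammaW w = A ++ 0 :: (w[k] + 1) :: gammaW (w.drop (k + 1)) := by
      conv_lhs => rw [← List.take_append_drop k w, List.drop_eq_getElem_cons hklt]
      rw [gammaW_append, gammaW_cons]
    have hval : (gammaW w)[n] = w[k] + 1 := by
      rw [List.getElem_of_eq hdec, List.getElem_append_right (by omega)]
      have : n - A.length = 1 := by omega
      simp [this]
    rw [hval] at hc
    have hset : (gammaW w).set n c = A ++ 0 :: c :: gammaW (w.drop (k + 1)) := by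
      rw [hdec]
      rw [List.set_append]
      have h1 : ¬ n < A.length := by omega
      rw [if_neg h1]
      have : n - A.length = 1 := by omega
      rw [this]
      rfl
    have htake : ((gammaW w).set n c).take (n + 1) = A ++ [0, c] := by
      rw [hset, List.take_append]
      have h1 : A.take (n + 1) = A := List.take_of_length_le (by omega)
      have h2 : n + 1 - A.length = 2 := by omega
      rw [h1, h2]
      rfl
    rcases Nat.eq_zero_or_pos c with rfl | hcpos
    · -- c = 0 : square [0][0] at the end
      exact ⟨[0], by simp, ⟨A, by rw [htake]; rfl⟩⟩
    · -- c = c' + 1 with c' < w[k]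
      obtain ⟨c', rfl⟩ : ∃ c', c = c' + 1 := ⟨c - 1, by omega⟩
      have hc' : c' < w[k] := by omega
      obtain ⟨x, hx, t, ht⟩ := hw k hklt c' hc'
      refine ⟨gammaW x, gammaW_ne_nil hx, gammaW t, ?_⟩
      have hsetw : (w.set k c').take (k + 1) = w.take k ++ [c'] := by
        rw [List.set_eq_take_cons_drop _ hklt, List.take_append]
        have h1 : (w.take k).take (k + 1) = w.take k :=
          List.take_of_length_le (by rw [List.length_take]; omega)
        have h2 : k + 1 - (w.take k).length = 1 := by rw [List.length_take]; omega
        rw [h1, h2]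
        rfl
      have := congrArg gammaW ht
      rw [gammaW_append, gammaW_append, hsetw, gammaW_append, gammaW_cons] at this
      rw [htake, ← List.append_assoc]
      rw [← List.append_assoc] at this
      rw [hAdef]
      simpa [gammaW] using this
end

section
/- The morphism φ preserves irreducibility with respect to overlaps: for every finite word w over ℕ, if w is irreducible with respect to overlaps then φ(w) is irreducible with respect to overlaps, and if w is irreducible after the first position then φ(w) is irreducible after the first position. -/
/-!
Write `u_c = φ^c(0) = y_c c` (`phiPowZero`, `phiPowZeroInit`). Unfolding the definition gives
`φ^c(00) = u_c u_c` and `φ(c) = c y_c c y_c (c+1) = c (u_c u_c without its last letter) (c+1)`.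
A position of `φ(v)` lying in the block `φ(b)` is handled by its place in the block:
* at its first letter `b`, a smaller letter `c` completes some `c x c x` ending the preceding
  part of `v`, and `φ(c x c x) = c x' c x'` because every `φ(c)` begins with `c`;
* strictly inside, irreducibility reduces to that of `u_b u_b = φ(u_{b-1} u_{b-1})`, which
  follows by induction on `b`;
* at the last letter `b + 1`, every smaller letter `c` completes the overlap `c y_c c y_c`,
  a suffix of `φ(b)` without its last letter.
-/

/-- S⁻¹: move the last letter of a nonempty word to the front. -/
def sInv (w : List ℕ) : List ℕ := w.rotate (w.length - 1)

/-- Apply a substitution `f` letterwise to a word (the morphism determined by `f`). -/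
def applyM (f : ℕ → List ℕ) (w : List ℕ) : List ℕ := (w.map f).flatten

/-- Fuel-indexed approximation of the morphism φ: `phiAux n` agrees with φ on all
letters `c < n`.  (Computing φ^c(00) only uses φ on letters smaller than `c`, so the
recursion is well-founded in the fuel.) -/
def phiAux : ℕ → ℕ → List ℕ
  | 0, _ => []
  | n + 1, c => sInv ((applyM (phiAux n))^[c] [0, 0]) ++ [c + 1]

/-- The morphism φ on letters: φ(h) = S⁻¹(φ^h(00))·(h+1).
In particular φ(0) = 001 and φ(1) = 1001002. -/
def phi (c : ℕ) : List ℕ := phiAux (c + 1) c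

/-- The morphism φ on words. -/
def phiW (w : List ℕ) : List ℕ := applyM phi w

/-- `w` is irreducible at (0-indexed) position `n` with respect to overlaps:
replacing the letter there by any strictly smaller letter produces a word having an
overlap a·x·a·x·a as a factor ending at that position (i.e. as a suffix of the prefix
of length `n+1` of the modified word). -/
def OvIrredAt (w : List ℕ) (n : ℕ) : Prop :=
  ∀ (hn : n < w.length), ∀ c < w[n],
    ∃ (a : ℕ) (x : List ℕ),
      ([a] ++ x ++ [a] ++ x ++ [a]) <:+ ((w.set n c).take (n + 1))

/-- `w` is irreducible (with respect to overlaps) at every position. -/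
def OvIrred (w : List ℕ) : Prop := ∀ n, OvIrredAt w n

/-- `w` is irreducible (with respect to overlaps) at every position except possibly
the first one. -/
def OvIrredAfterFirst (w : List ℕ) : Prop := ∀ n, 1 ≤ n → OvIrredAt w n

lemma applyM_eq_flatMap (f : ℕ → List ℕ) (w : List ℕ) : applyM f w = w.flatMap f :=
  List.flatMap_def.symm

lemma le_of_mem_iterate_applyM {f : ℕ → List ℕ} (hf : ∀ b, ∀ a ∈ f b, a ≤ b + 1)
    {w : List ℕ} {i : ℕ} (hw : ∀ a ∈ w, a ≤ i) (j : ℕ) :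
    ∀ a ∈ (applyM f)^[j] w, a ≤ i + j := by
  induction j with
  | zero => exact hw
  | succ j ih =>
    intro a ha
    rw [Function.iterate_succ_apply', applyM_eq_flatMap, List.mem_flatMap] at ha
    obtain ⟨b, hb, hab⟩ := ha
    have := ih b hb
    have := hf b a hab
    omega

lemma le_of_mem_phiAux (n c : ℕ) : ∀ a ∈ phiAux n c, a ≤ c + 1 := by
  induction n generalizing c with
  | zero => simp [phiAux]
  | succ n ih =>
    simp only [phiAux, sInv, List.mem_append, List.mem_rotate, List.mem_singleton]
    rintro a (ha | rfl)
    · have := le_of_mem_iterate_applyM ih (i := 0) (by simp) c a ha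
      omega
    · rfl

lemma iterate_applyM_congr {f g : ℕ → List ℕ} (hf : ∀ b, ∀ a ∈ f b, a ≤ b + 1) {c : ℕ}
    (hfg : ∀ b < c, f b = g b) : (applyM f)^[c] [0, 0] = (applyM g)^[c] [0, 0] := by
  suffices ∀ j ≤ c, (applyM f)^[j] [0, 0] = (applyM g)^[j] [0, 0] from this c le_rfl
  intro j
  induction j with
  | zero => intro _; rfl
  | succ j ih =>
    intro hj
    rw [Function.iterate_succ_apply', Function.iterate_succ_apply', ← ih (by omega),
      applyM_eq_flatMap, applyM_eq_flatMap]
    refine List.flatMap_congr fun b hb => hfg b ?_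
    have := le_of_mem_iterate_applyM hf (i := 0) (by simp) j b hb
    omega

lemma phiAux_eq_phiAux (n m c : ℕ) (hn : c < n) (hm : c < m) : phiAux n c = phiAux m c := by
  induction n generalizing m c with
  | zero => omega
  | succ n ih =>
    obtain ⟨m, rfl⟩ : ∃ m', m = m' + 1 := ⟨m - 1, by omega⟩
    simp only [phiAux]
    rw [iterate_applyM_congr (le_of_mem_phiAux n) fun b hb => ih m b (by omega) (by omega)]

lemma phi_eq_sInv_iterate (c : ℕ) : phi c = sInv (phiW^[c] [0, 0]) ++ [c + 1] := by
  show sInv ((applyM (phiAux c))^[c] [0, 0]) ++ [c + 1] = _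
  rw [iterate_applyM_congr (le_of_mem_phiAux c)
    fun b hb => phiAux_eq_phiAux c (b + 1) b hb (by omega)]
  rfl

lemma le_of_mem_phi {a c : ℕ} (h : a ∈ phi c) : a ≤ c + 1 := le_of_mem_phiAux _ _ _ h

lemma phiW_append (s t : List ℕ) : phiW (s ++ t) = phiW s ++ phiW t := by
  simp [phiW, applyM_eq_flatMap]

lemma phiW_singleton (a : ℕ) : phiW [a] = phi a := by
  simp [phiW, applyM_eq_flatMap]

lemma sInv_concat (t : List ℕ) (a : ℕ) : sInv (t ++ [a]) = a :: t := by
  simp [sInv]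

def phiPowZero (c : ℕ) : List ℕ := phiW^[c] [0]

def phiPowZeroInit (c : ℕ) : List ℕ := (phiPowZero c).dropLast

lemma phiPowZero_succ (c : ℕ) : phiPowZero (c + 1) = phiW (phiPowZero c) :=
  Function.iterate_succ_apply' _ _ _

lemma iterate_phiW_zero_zero (c : ℕ) : phiW^[c] [0, 0] = phiPowZero c ++ phiPowZero c := by
  induction c with
  | zero => rfl
  | succ c ih => rw [Function.iterate_succ_apply', ih, phiW_append, phiPowZero_succ]

lemma phiPowZero_eq_concat (c : ℕ) : phiPowZero c = phiPowZeroInit c ++ [c] := by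
  suffices ∃ t, phiPowZero c = t ++ [c] by
    obtain ⟨t, ht⟩ := this
    rw [phiPowZeroInit, ht, List.dropLast_concat]
  induction c with
  | zero => exact ⟨[], rfl⟩
  | succ c ih =>
    obtain ⟨t, ht⟩ := ih
    exact ⟨phiW t ++ sInv (phiW^[c] [0, 0]), by
      rw [phiPowZero_succ, ht, phiW_append, phiW_singleton, phi_eq_sInv_iterate,
        List.append_assoc]⟩

lemma phi_eq (c : ℕ) :
    phi c = [c] ++ phiPowZeroInit c ++ [c] ++ phiPowZeroInit c ++ [c + 1] := by
  rw [phi_eq_sInv_iterate, iterate_phiW_zero_zero, phiPowZero_eq_concat,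
    show ∀ y : List ℕ, y ++ [c] ++ (y ++ [c]) = (y ++ [c] ++ y) ++ [c] by simp, sInv_concat]
  simp

lemma phi_eq_cons (c : ℕ) : phi c = c :: (phi c).tail := by
  rw [phi_eq]; rfl

lemma phi_dropLast (c : ℕ) :
    (phi c).dropLast = [c] ++ phiPowZeroInit c ++ [c] ++ phiPowZeroInit c := by
  rw [phi_eq, List.dropLast_concat]

lemma phiPowZeroInit_succ (c : ℕ) :
    phiPowZeroInit (c + 1) = phiW (phiPowZeroInit c) ++ (phi c).dropLast := by
  rw [phiPowZeroInit, phiPowZero_succ, phiPowZero_eq_concat c, phiW_append, phiW_singleton,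
    List.dropLast_append_of_ne_nil (by simp [phi_eq])]

lemma phiPowZeroInit_suffix_of_le {c b : ℕ} (h : c ≤ b) :
    phiPowZeroInit c <:+ phiPowZeroInit b := by
  induction b, h using Nat.le_induction with
  | base => exact List.suffix_refl _
  | succ b _ ih =>
    refine ih.trans (List.IsSuffix.trans ?_ (phiPowZeroInit_succ b ▸ List.suffix_append _ _))
    rw [phi_dropLast]
    exact List.suffix_append _ _

lemma phi_dropLast_suffix_of_lt {c b : ℕ} (h : c < b) : (phi c).dropLast <:+ phiPowZeroInit b :=
  (phiPowZeroInit_succ c ▸ List.suffix_append _ _).trans (phiPowZeroInit_suffix_of_le h)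

lemma head?_phiW (w : List ℕ) : (phiW w).head? = w.head? := by
  cases w with
  | nil => rfl
  | cons a t => rw [← List.singleton_append, phiW_append, phiW_singleton, phi_eq_cons]; rfl

lemma head?_phiPowZero (c : ℕ) : (phiPowZero c).head? = some 0 := by
  induction c with
  | zero => rfl
  | succ c ih => rw [phiPowZero_succ, head?_phiW, ih]

lemma le_of_mem_phiPowZero {a c : ℕ} (h : a ∈ phiPowZero c) : a ≤ c := by
  have := le_of_mem_iterate_applyM (fun b _ => le_of_mem_phi) (i := 0) (by simp) c a h
  omega

/-- `s ++ [c]` has an overlap `c x c x c` as a suffix. -/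
def CompletesOverlap (s : List ℕ) (c : ℕ) : Prop := ∃ x, [c] ++ x ++ [c] ++ x <:+ s

lemma CompletesOverlap.mono {s t : List ℕ} {c : ℕ} (h : CompletesOverlap s c) (hst : s <:+ t) :
    CompletesOverlap t c :=
  let ⟨x, hx⟩ := h; ⟨x, hx.trans hst⟩

lemma not_completesOverlap_nil (c : ℕ) : ¬ CompletesOverlap [] c := by
  rintro ⟨x, hx⟩
  simpa using hx.length_le

lemma CompletesOverlap.phiW {s : List ℕ} {c : ℕ} (h : CompletesOverlap s c) :
    CompletesOverlap (phiW s) c := by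
  obtain ⟨x, t, rfl⟩ := h
  refine ⟨(phi c).tail ++ _root_.phiW x, _root_.phiW t, ?_⟩
  simp only [phiW_append, phiW_singleton]
  rw [phi_eq_cons]
  simp

lemma ovIrredAt_iff {w : List ℕ} {n : ℕ} :
    OvIrredAt w n ↔ ∀ hn : n < w.length, ∀ c < w[n], CompletesOverlap (w.take n) c := by
  have overlap_suffix_iff : ∀ (s : List ℕ) (c a : ℕ) (x : List ℕ),
      [a] ++ x ++ [a] ++ x ++ [a] <:+ s ++ [c] ↔ [a] ++ x ++ [a] ++ x <:+ s ∧ a = c := by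
    intro s c a x
    rw [← List.reverse_prefix, show (s ++ [c]).reverse = c :: s.reverse by simp,
      show ([a] ++ x ++ [a] ++ x ++ [a]).reverse = a :: ([a] ++ x ++ [a] ++ x).reverse by simp,
      List.cons_prefix_cons, List.reverse_prefix, and_comm]
  unfold OvIrredAt CompletesOverlap
  refine forall_congr' fun hn => forall₂_congr fun c _ => ?_
  rw [List.take_add_one, List.take_set_of_le le_rfl]
  simp only [List.getElem?_set_self hn, Option.toList_some, overlap_suffix_iff]
  constructor
  · rintro ⟨a, x, hx, rfl⟩
    exact ⟨x, hx⟩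
  · rintro ⟨x, hx⟩
    exact ⟨c, x, hx, rfl⟩

lemma ovIrredAt_zero_iff {w : List ℕ} : OvIrredAt w 0 ↔ ∀ a ∈ w.head?, a = 0 := by
  rw [ovIrredAt_iff]
  cases w with
  | nil => simp
  | cons a t =>
    simp only [List.take_zero, not_completesOverlap_nil, imp_false, not_lt]
    simpa using ⟨fun h => Nat.le_zero.mp (h 0), fun h c => h ▸ c.zero_le⟩

lemma ovIrredAt_append_of_lt {w : List ℕ} {n : ℕ} (s : List ℕ) (hn : n < w.length) :
    OvIrredAt (w ++ s) n ↔ OvIrredAt w n := by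
  simp only [ovIrredAt_iff, List.take_append_of_le_length hn.le, List.getElem_append_left hn]
  simp [hn, show n < w.length + s.length by omega]

lemma ovIrredAt_concat_length_iff {w : List ℕ} {b : ℕ} :
    OvIrredAt (w ++ [b]) w.length ↔ ∀ c < b, CompletesOverlap w c := by
  simp [ovIrredAt_iff]

lemma OvIrredAt.append_left {w : List ℕ} {n : ℕ} (h : OvIrredAt w n) (s : List ℕ) :
    OvIrredAt (s ++ w) (s.length + n) := by
  rw [ovIrredAt_iff] at h ⊢
  intro hn c hc
  rw [List.take_length_add_append]
  rw [List.getElem_append_right (by omega)] at hc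
  simp only [Nat.add_sub_cancel_left] at hc
  exact (h (by simp at hn; omega) c hc).mono (List.suffix_append _ _)

lemma ovIrredAt_of_length_le {w : List ℕ} {n : ℕ} (h : w.length ≤ n) : OvIrredAt w n :=
  fun hn => absurd hn (by omega)

lemma OvIrredAfterFirst.of_append {w : List ℕ} (s : List ℕ) (h : OvIrredAfterFirst (w ++ s)) :
    OvIrredAfterFirst w := by
  intro n hn
  by_cases hlt : n < w.length
  · exact (ovIrredAt_append_of_lt s hlt).mp (h n hn)
  · exact ovIrredAt_of_length_le (by omega)

lemma ovIrredAfterFirst_phi {b : ℕ} (hb : OvIrredAfterFirst (phiPowZero b ++ phiPowZero b)) :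
    OvIrredAfterFirst (phi b) := by
  have hphi : phi b = [b] ++ (phiPowZero b ++ phiPowZeroInit b) ++ [b + 1] := by
    rw [phi_eq, phiPowZero_eq_concat]; simp
  have hu : phiPowZero b = phiPowZeroInit b ++ [b] := phiPowZero_eq_concat b
  set u := phiPowZero b
  set y := phiPowZeroInit b
  intro j hj
  rcases lt_trichotomy j (1 + (u ++ y).length) with hlt | heq | hgt
  · obtain ⟨q, rfl⟩ : ∃ q, j = 1 + q := ⟨j - 1, by omega⟩
    rw [hphi, ovIrredAt_append_of_lt _ (by simp at hlt ⊢; omega)]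
    refine OvIrredAt.append_left (s := [b]) ?_
    rcases Nat.eq_zero_or_pos q with rfl | hq
    · rw [ovIrredAt_zero_iff, List.head?_append, head?_phiPowZero]
      simp
    · rw [← ovIrredAt_append_of_lt [b] (by simpa using hlt), List.append_assoc, ← hu]
      exact hb q hq
  · rw [heq, hphi, show 1 + (u ++ y).length = ([b] ++ (u ++ y)).length by simp [add_comm],
      ovIrredAt_concat_length_iff]
    have hdrop : [b] ++ (u ++ y) = [b] ++ y ++ [b] ++ y := by rw [hu]; simp
    intro c hc
    rw [hdrop]
    rcases Nat.lt_or_ge c b with hcb | hcb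
    · refine ⟨phiPowZeroInit c, ?_⟩
      rw [← phi_dropLast]
      exact (phi_dropLast_suffix_of_lt hcb).trans (List.suffix_append _ _)
    · obtain rfl : c = b := by omega
      exact ⟨y, List.suffix_refl _⟩
  · exact ovIrredAt_of_length_le (by rw [hphi]; simp at hgt ⊢; omega)

lemma ovIrredAfterFirst_phiW {v : List ℕ} (hv : OvIrredAfterFirst v)
    (hu : ∀ b ∈ v, OvIrredAfterFirst (phiPowZero b ++ phiPowZero b)) :
    OvIrredAfterFirst (phiW v) := by
  induction v using List.reverseRecOn with
  | nil => exact fun n _ => ovIrredAt_of_length_le (by simp [phiW, applyM])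
  | append_singleton v b ih =>
    have ih := ih (hv.of_append [b]) fun a ha => hu a (by simp [ha])
    rw [phiW_append, phiW_singleton]
    intro p hp
    by_cases hlt : p < (phiW v).length
    · exact (ovIrredAt_append_of_lt _ hlt).mpr (ih p hp)
    obtain ⟨j, rfl⟩ : ∃ j, p = (phiW v).length + j := ⟨p - (phiW v).length, by omega⟩
    rcases Nat.eq_zero_or_pos j with rfl | hj
    · have hv0 : 1 ≤ v.length := by
        by_contra h
        simp_all [phiW, applyM]
      have hstart : ∀ c < b, CompletesOverlap (phiW v) c := fun c hc =>
        (ovIrredAt_concat_length_iff.mp (hv _ hv0) c hc).phiW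
      rw [phi_eq_cons, List.append_cons, ovIrredAt_append_of_lt _ (by simp), Nat.add_zero]
      exact ovIrredAt_concat_length_iff.mpr hstart
    · exact (ovIrredAfterFirst_phi (hu b (by simp)) j hj).append_left _

lemma ovIrredAfterFirst_phiPowZero_append_self (n : ℕ) :
    OvIrredAfterFirst (phiPowZero n ++ phiPowZero n) := by
  induction n using Nat.strong_induction_on with
  | _ n ih =>
    cases n with
    | zero =>
      intro p hp
      rcases Nat.lt_or_ge p 2 with hlt | hge
      · obtain rfl : p = 1 := by omega
        exact fun _ c hc => absurd hc (Nat.not_lt_zero c)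
      · exact ovIrredAt_of_length_le hge
    | succ n =>
      rw [phiPowZero_succ, ← phiW_append]
      refine ovIrredAfterFirst_phiW (ih n (by omega)) fun b hb => ih b ?_
      rcases List.mem_append.mp hb with h | h <;> have := le_of_mem_phiPowZero h <;> omega

/-- φ preserves irreducibility with respect to overlaps, and also preserves
irreducibility after the first position. -/
theorem phi_preserves_irreducible (w : List ℕ) :
    (OvIrred w → OvIrred (phiW w)) ∧
    (OvIrredAfterFirst w → OvIrredAfterFirst (phiW w)) := by
  have after_first (hw : OvIrredAfterFirst w) : OvIrredAfterFirst (phiW w) :=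
    ovIrredAfterFirst_phiW hw fun b _ => ovIrredAfterFirst_phiPowZero_append_self b
  refine ⟨fun hw n => ?_, after_first⟩
  rcases Nat.eq_zero_or_pos n with rfl | hn
  · rw [ovIrredAt_zero_iff, head?_phiW]
    exact ovIrredAt_zero_iff.mp (hw 0)
  · exact after_first (fun m _ => hw m) n hn
end
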